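/- For 1 ≤ k ≤ n, the dual of the k-th branch Λ_k = {A ∈ Sym²(ℝⁿ) : λ_k(A) ≥ 0} of the homogeneous Monge–Ampère equation is Λ_{n−k+1}; that is, Λ̃_k = Λ_{n−k+1}. -/

import Mathlib

open Pointwise

/-- The Dirichlet dual of a set of symmetric matrices, inside `Sym²(ℝⁿ)`. -/
def dirichletDual {n : ℕ} (F : Set (selfAdjoint (Matrix (Fin n) (Fin n) ℝ))) :
    Set (selfAdjoint (Matrix (Fin n) (Fin n) ℝ)) :=
  -((interior F)ᶜ)

/-- An element of `Sym²(ℝⁿ)` is a Hermitian (= real symmetric) matrix. -/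
theorem hermOf {n : ℕ} (A : selfAdjoint (Matrix (Fin n) (Fin n) ℝ)) :
    (A : Matrix (Fin n) (Fin n) ℝ).IsHermitian := A.prop

/-- The increasingly ordered eigenvalues `λ_1(A) ≤ … ≤ λ_n(A)` of a symmetric matrix. -/
noncomputable def sortedEig {n : ℕ} (A : Matrix (Fin n) (Fin n) ℝ) (hA : A.IsHermitian) :
    Fin n → ℝ :=
  hA.eigenvalues ∘ Tuple.sort hA.eigenvalues

/-- The `k`-th branch `Λ_k = {A : λ_k(A) ≥ 0}` of the homogeneous Monge–Ampère equation
(indices `0, …, n−1` correspond to `1, …, n`). -/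
noncomputable def branch (n : ℕ) (k : Fin n) : Set (selfAdjoint (Matrix (Fin n) (Fin n) ℝ)) :=
  {A | 0 ≤ sortedEig (A : Matrix (Fin n) (Fin n) ℝ) (hermOf A) k}

/-!
Everything rests on the lower half of the Courant–Fischer principle: with `0`-based indices,
`c ≤ λ_k(A)` iff `⟪A x, x⟫ ≥ c ‖x‖²` on some subspace of dimension `n - k`. It makes `λ_k`
1-Lipschitz for the operator norm and gives `λ_k(A - ε I) + ε ≤ λ_k(A)`, so the interior of `Λ_k`
is `{λ_k > 0}`. It also shows that `λ_k` depends only on the operator, not on the sorted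
eigenbasis computing it; the reversed eigenbasis of `A` is a sorted eigenbasis of `-A`, whence
`λ_k(-A) = -λ_{n-1-k}(A)`. Thus `-A ∉ int Λ_k ⟺ λ_k(-A) ≤ 0 ⟺ λ_{n-1-k}(A) ≥ 0`.
-/

open scoped RealInnerProductSpace
open Module Submodule

theorem exists_ne_zero_mem_inf_of_finrank_lt {K V : Type*} [DivisionRing K] [AddCommGroup V]
    [Module K V] [FiniteDimensional K V] (W U : Submodule K V)
    (h : finrank K V < finrank K W + finrank K U) : ∃ x, x ≠ 0 ∧ x ∈ W ∧ x ∈ U := by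
  have hsum := finrank_sup_add_finrank_inf_eq W U
  have hsup := (W ⊔ U).finrank_le
  obtain ⟨x, hx, hx0⟩ := exists_mem_ne_zero_of_ne_bot (p := W ⊓ U) fun h' => by
    rw [h', finrank_bot] at hsum; omega
  exact ⟨x, hx0, hx.1, hx.2⟩

section Eigenbasis

variable {E ι : Type*} [NormedAddCommGroup E] [InnerProductSpace ℝ E] [Fintype ι]
  {T : E →L[ℝ] E} {b : OrthonormalBasis ι ℝ E} {μ : ι → ℝ}

theorem inner_apply_self_eq_sum (hT : ∀ i, T (b i) = μ i • b i) (x : E) :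
    ⟪T x, x⟫ = ∑ i, μ i * ⟪b i, x⟫ ^ 2 := by
  nth_rewrite 1 [← b.sum_repr' x]
  simp only [map_sum, map_smul, hT, sum_inner, real_inner_smul_left]
  exact Finset.sum_congr rfl fun i _ => by ring

theorem OrthonormalBasis.inner_eq_zero_of_mem_span_image (b : OrthonormalBasis ι ℝ E)
    {s : Set ι} {j : ι} (hj : j ∉ s) {x : E} (hx : x ∈ span ℝ (b '' s)) : ⟪b j, x⟫ = 0 := by
  have : span ℝ (b '' s) ≤ (ℝ ∙ b j)ᗮ := span_le.2 <| by
    rintro _ ⟨i, hi, rfl⟩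
    exact mem_orthogonal_singleton_iff_inner_right.2
      (b.orthonormal.2 fun h => hj (h ▸ hi))
  exact mem_orthogonal_singleton_iff_inner_right.1 (this hx)

theorem OrthonormalBasis.finrank_span_image (b : OrthonormalBasis ι ℝ E) (s : Finset ι) :
    finrank ℝ (span ℝ (b '' s)) = s.card := by
  rw [Set.image_eq_range]
  exact (finrank_span_eq_card
    (b.orthonormal.linearIndependent.comp _ Subtype.val_injective)).trans (by simp)

theorem mul_norm_sq_le_inner_of_mem_span (hT : ∀ i, T (b i) = μ i • b i) {s : Set ι} {c : ℝ}
    (hc : ∀ i ∈ s, c ≤ μ i) {x : E} (hx : x ∈ span ℝ (b '' s)) : c * ‖x‖ ^ 2 ≤ ⟪T x, x⟫ := by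
  rw [inner_apply_self_eq_sum hT, ← b.sum_sq_inner_right, Finset.mul_sum]
  refine Finset.sum_le_sum fun i _ => ?_
  by_cases hi : i ∈ s
  · exact mul_le_mul_of_nonneg_right (hc i hi) (sq_nonneg _)
  · simp [b.inner_eq_zero_of_mem_span_image hi hx]

theorem inner_le_mul_norm_sq_of_mem_span (hT : ∀ i, T (b i) = μ i • b i) {s : Set ι} {c : ℝ}
    (hc : ∀ i ∈ s, μ i ≤ c) {x : E} (hx : x ∈ span ℝ (b '' s)) : ⟪T x, x⟫ ≤ c * ‖x‖ ^ 2 := by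
  rw [inner_apply_self_eq_sum hT, ← b.sum_sq_inner_right, Finset.mul_sum]
  refine Finset.sum_le_sum fun i _ => ?_
  by_cases hi : i ∈ s
  · exact mul_le_mul_of_nonneg_right (hc i hi) (sq_nonneg _)
  · simp [b.inner_eq_zero_of_mem_span_image hi hx]

end Eigenbasis

section CourantFischer

variable {E : Type*} [NormedAddCommGroup E] [InnerProductSpace ℝ E] {m : ℕ}
  {T : E →L[ℝ] E} {b : OrthonormalBasis (Fin m) ℝ E} {μ : Fin m → ℝ}

theorem le_eigenvalue_iff_exists_submodule (hT : ∀ i, T (b i) = μ i • b i) (hμ : Monotone μ)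
    (k : Fin m) (c : ℝ) :
    c ≤ μ k ↔ ∃ W : Submodule ℝ E, finrank ℝ W = m - k ∧ ∀ x ∈ W, c * ‖x‖ ^ 2 ≤ ⟪T x, x⟫ := by
  constructor
  · refine fun hc => ⟨span ℝ (b '' Finset.Ici k), by simp [b.finrank_span_image], fun x hx => ?_⟩
    exact mul_norm_sq_le_inner_of_mem_span hT
      (fun i hi => hc.trans (hμ (Finset.mem_Ici.1 hi))) hx
  · rintro ⟨W, hW, hWT⟩
    have : FiniteDimensional ℝ E := b.toBasis.finiteDimensional_of_finite
    have hdim : finrank ℝ E < finrank ℝ W + finrank ℝ (span ℝ (b '' Finset.Iic k)) := by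
      simp only [finrank_eq_card_basis b.toBasis, hW, b.finrank_span_image, Fin.card_Iic,
        Fintype.card_fin]
      omega
    obtain ⟨x, hx0, hxW, hxV⟩ := exists_ne_zero_mem_inf_of_finrank_lt _ _ hdim
    have hle := (hWT x hxW).trans (inner_le_mul_norm_sq_of_mem_span hT
      (fun i hi => hμ (Finset.mem_Iic.1 hi)) hxV)
    exact le_of_mul_le_mul_right hle (by positivity)

theorem eigenvalues_eq_of_sorted_eigenbasis {b' : OrthonormalBasis (Fin m) ℝ E} {μ' : Fin m → ℝ}
    (hT : ∀ i, T (b i) = μ i • b i) (hμ : Monotone μ)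
    (hT' : ∀ i, T (b' i) = μ' i • b' i) (hμ' : Monotone μ') : μ = μ' :=
  funext fun k => eq_of_forall_le_iff fun c =>
    (le_eigenvalue_iff_exists_submodule hT hμ k c).trans
      (le_eigenvalue_iff_exists_submodule hT' hμ' k c).symm

theorem eigenvalue_add_le_of_inner_le {S : E →L[ℝ] E} {ν : Fin m → ℝ}
    {b' : OrthonormalBasis (Fin m) ℝ E}
    (hS : ∀ i, S (b' i) = ν i • b' i) (hν : Monotone ν)
    (hT : ∀ i, T (b i) = μ i • b i) (hμ : Monotone μ) {t : ℝ}
    (h : ∀ x, ⟪S x, x⟫ + t * ‖x‖ ^ 2 ≤ ⟪T x, x⟫) (k : Fin m) : ν k + t ≤ μ k := by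
  obtain ⟨W, hW, hWS⟩ := (le_eigenvalue_iff_exists_submodule hS hν k (ν k)).1 le_rfl
  refine (le_eigenvalue_iff_exists_submodule hT hμ k _).2 ⟨W, hW, fun x hx => ?_⟩
  linarith [hWS x hx, h x]

end CourantFischer

section SortedEigenvalues

open Matrix

variable {n : ℕ}

noncomputable def sortedEigenvectorBasis {A : Matrix (Fin n) (Fin n) ℝ} (hA : A.IsHermitian) :
    OrthonormalBasis (Fin n) ℝ (EuclideanSpace ℝ (Fin n)) :=
  hA.eigenvectorBasis.reindex (Tuple.sort hA.eigenvalues).symm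

theorem toEuclideanCLM_sortedEigenvectorBasis {A : Matrix (Fin n) (Fin n) ℝ} (hA : A.IsHermitian)
    (i : Fin n) :
    toEuclideanCLM (𝕜 := ℝ) A (sortedEigenvectorBasis hA i) =
      sortedEig A hA i • sortedEigenvectorBasis hA i := by
  ext j
  simpa [sortedEigenvectorBasis, sortedEig] using
    congrFun (hA.mulVec_eigenvectorBasis (Tuple.sort hA.eigenvalues i)) j

theorem monotone_sortedEig {A : Matrix (Fin n) (Fin n) ℝ} (hA : A.IsHermitian) :
    Monotone (sortedEig A hA) :=
  Tuple.monotone_sort _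

theorem sortedEig_neg {A : Matrix (Fin n) (Fin n) ℝ} (hA : A.IsHermitian) (k : Fin n) :
    sortedEig (-A) hA.neg k = -sortedEig A hA k.rev := by
  refine congrFun (eigenvalues_eq_of_sorted_eigenbasis
    (toEuclideanCLM_sortedEigenvectorBasis hA.neg) (monotone_sortedEig hA.neg)
    (b' := (sortedEigenvectorBasis hA).reindex Fin.revPerm) (fun i => ?_)
    fun i j hij => neg_le_neg (monotone_sortedEig hA (Fin.rev_le_rev.2 hij))) k
  simp [toEuclideanCLM_sortedEigenvectorBasis]

theorem sortedEig_sub_norm_le {A B : Matrix (Fin n) (Fin n) ℝ} (hA : A.IsHermitian)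
    (hB : B.IsHermitian) (k : Fin n) :
    sortedEig B hB k - ‖toEuclideanCLM (𝕜 := ℝ) (B - A)‖ ≤ sortedEig A hA k := by
  refine eigenvalue_add_le_of_inner_le (toEuclideanCLM_sortedEigenvectorBasis hB)
    (monotone_sortedEig hB) (toEuclideanCLM_sortedEigenvectorBasis hA) (monotone_sortedEig hA)
    (fun x => ?_) k
  set C := toEuclideanCLM (𝕜 := ℝ) (B - A) with hC
  have hCx : C x = toEuclideanCLM (𝕜 := ℝ) B x - toEuclideanCLM (𝕜 := ℝ) A x := by
    rw [hC, map_sub]; rfl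
  have hle : ⟪C x, x⟫ ≤ ‖C‖ * ‖x‖ ^ 2 :=
    calc _ ≤ ‖C x‖ * ‖x‖ := real_inner_le_norm _ _
      _ ≤ ‖C‖ * ‖x‖ * ‖x‖ := by gcongr; exact C.le_opNorm x
      _ = _ := by ring
  rw [hCx, inner_sub_left] at hle
  linarith

theorem abs_sortedEig_sub_le {A B : Matrix (Fin n) (Fin n) ℝ} (hA : A.IsHermitian)
    (hB : B.IsHermitian) (k : Fin n) :
    |sortedEig B hB k - sortedEig A hA k| ≤ ‖toEuclideanCLM (𝕜 := ℝ) (B - A)‖ := by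
  have hBA := sortedEig_sub_norm_le hA hB k
  have hAB := sortedEig_sub_norm_le hB hA k
  rw [map_sub, norm_sub_rev, ← map_sub] at hAB
  exact abs_sub_le_iff.2 ⟨by linarith, by linarith⟩

theorem sortedEig_sub_smul_one_add_le {A : Matrix (Fin n) (Fin n) ℝ} (hA : A.IsHermitian)
    (ε : ℝ) (h : (A - ε • 1).IsHermitian) (k : Fin n) :
    sortedEig (A - ε • 1) h k + ε ≤ sortedEig A hA k := by
  refine eigenvalue_add_le_of_inner_le (toEuclideanCLM_sortedEigenvectorBasis h)
    (monotone_sortedEig h) (toEuclideanCLM_sortedEigenvectorBasis hA) (monotone_sortedEig hA)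
    (fun x => le_of_eq ?_) k
  simp [inner_sub_left, real_inner_smul_left]

theorem continuous_sortedEig (k : Fin n) :
    Continuous fun A : selfAdjoint (Matrix (Fin n) (Fin n) ℝ) =>
      sortedEig (A : Matrix (Fin n) (Fin n) ℝ) (hermOf A) k := by
  have hC : Continuous (toEuclideanCLM (𝕜 := ℝ) (n := Fin n)) :=
    LinearMap.continuous_of_finiteDimensional
      (toEuclideanCLM (𝕜 := ℝ) (n := Fin n)).toAlgEquiv.toLinearMap
  refine continuous_iff_continuousAt.2 fun A => tendsto_iff_dist_tendsto_zero.2 ?_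
  refine squeeze_zero (fun _ => dist_nonneg)
    (fun B => abs_sortedEig_sub_le (hermOf A) (hermOf B) k) ?_
  have hdist : Continuous fun B : selfAdjoint (Matrix (Fin n) (Fin n) ℝ) =>
      ‖toEuclideanCLM (𝕜 := ℝ) ((B - A : selfAdjoint (Matrix (Fin n) (Fin n) ℝ)) :
        Matrix (Fin n) (Fin n) ℝ)‖ :=
    (hC.comp (by fun_prop)).norm
  simpa using hdist.tendsto A

end SortedEigenvalues

theorem interior_branch (n : ℕ) (k : Fin n) :
    interior (branch n k) =
      {A : selfAdjoint (Matrix (Fin n) (Fin n) ℝ) |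
        0 < sortedEig (A : Matrix (Fin n) (Fin n) ℝ) (hermOf A) k} := by
  refine subset_antisymm (fun A hA => ?_) (interior_maximal (fun _ hA => le_of_lt (α := ℝ) hA)
    (isOpen_lt continuous_const (continuous_sortedEig k)))
  let g : ℝ → selfAdjoint (Matrix (Fin n) (Fin n) ℝ) := fun ε => A - ε • 1
  have hg : Continuous g := Continuous.subtype_mk (by fun_prop) _
  have hg0 : g 0 = A := by simp [g]
  have hev : ∀ᶠ ε in nhdsWithin 0 (Set.Ioi 0), g ε ∈ branch n k :=
    nhdsWithin_le_nhds <| (hg.continuousAt.eventually_mem (hg0 ▸ isOpen_interior.mem_nhds hA)).mono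
      fun _ h => interior_subset h
  obtain ⟨ε, hε, hεpos⟩ := (hev.and self_mem_nhdsWithin).exists
  have hgε : 0 ≤ sortedEig ((A : Matrix (Fin n) (Fin n) ℝ) - ε • 1) (hermOf (g ε)) k := hε
  have := sortedEig_sub_smul_one_add_le (hermOf A) ε (hermOf (g ε)) k
  show 0 < sortedEig (A : Matrix (Fin n) (Fin n) ℝ) (hermOf A) k
  linarith

/-- The dual of the branch `Λ_k` is `Λ_{n−k+1}` (in 1-based indexing);
with 0-based indices, `Λ̃_k = Λ_{k.rev}` where `k.rev = n − 1 − k`. -/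
theorem dual_branch (n : ℕ) (k : Fin n) :
    dirichletDual (branch n k) = branch n k.rev := by
  ext A
  have hneg : sortedEig ((-A : selfAdjoint (Matrix (Fin n) (Fin n) ℝ)) : Matrix (Fin n) (Fin n) ℝ)
      (hermOf (-A)) k = -sortedEig (A : Matrix (Fin n) (Fin n) ℝ) (hermOf A) k.rev :=
    sortedEig_neg (hermOf A) k
  simp only [dirichletDual, Set.mem_neg, Set.mem_compl_iff, interior_branch, Set.mem_ofPred_eq,
    not_lt, hneg, neg_nonpos]
  rfl
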